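/- arXiv:1010.0429 — 2 statements merged into one kernel-verified Lean document; each statement's English description precedes it below -/
import Mathlib

section
/- For a rational number a and any integer k ≥ 0, the number μ_a^k · (a)_k / k! is an integer, where μ_a^k = (den a)^k · Π_{p | den a} p^{⌊k/(p-1)⌋} with the product over primes p dividing the denominator of a. -/
/-- `μ_a^k = (den a)^k · ∏_{p | den a} p^(⌊k/(p-1)⌋)`, product over primes dividing `den a`. -/
def mu (a : ℚ) (k : ℕ) : ℕ :=
  a.den ^ k * ∏ p ∈ a.den.primeFactors, p ^ (k / (p - 1))

/-- Pochhammer symbol `(a)_k = a(a+1)⋯(a+k-1)` for rational `a`. -/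
def pochQ (a : ℚ) (k : ℕ) : ℚ := ∏ j ∈ Finset.range k, (a + j)

/-!
Write `a = n / d`, so that `d^k (a)_k = ∏_{j<k} (n + j d)`. If `m ∣ k!` is prime to `d`, then
`d` is invertible modulo `m`, so modulo `m` this product is a unit times a product of `k` consecutive
integers, which `k!` divides; hence the part of `k!` prime to `d` divides `∏ (n + j d)`. For a
prime `p ∣ d`, Legendre's formula bounds the exponent of `p` in `k!` by `⌊k/(p-1)⌋`, which is
exactly what the factor `p^⌊k/(p-1)⌋` of `μ_a^k` supplies.
-/

open Finset
open scoped Nat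

lemma ascPochhammer_eval_eq_prod_range {R : Type*} [CommSemiring R] (k : ℕ) (r : R) :
    (ascPochhammer R k).eval r = ∏ j ∈ range k, (r + j) := by
  induction k with
  | zero => simp
  | succ k ih => simp [ascPochhammer_succ_right, ih, prod_range_succ]

lemma Int.factorial_dvd_prod_range_add (n : ℤ) (k : ℕ) :
    (k ! : ℤ) ∣ ∏ j ∈ Finset.range k, (n + j) := by
  have h := Ring.factorial_nsmul_multichoose_eq_ascPochhammer n k
  rw [Polynomial.ascPochhammer_smeval_eq_eval, ascPochhammer_eval_eq_prod_range, nsmul_eq_mul] at h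
  exact ⟨_, h.symm⟩

lemma Int.dvd_prod_range_add_mul {m d : ℤ} (n : ℤ) {k : ℕ} (hmd : IsCoprime d m)
    (hm : m ∣ k !) : m ∣ ∏ j ∈ Finset.range k, (n + j * d) := by
  obtain ⟨u, v, huv⟩ := hmd
  have hmod : u ^ k * ∏ j ∈ Finset.range k, (n + j * d) ≡
      ∏ j ∈ Finset.range k, (u * n + j) [ZMOD m] := by
    rw [← card_range k, ← prod_const, card_range, ← prod_mul_distrib]
    refine Int.ModEq.prod fun j _ => (Int.modEq_iff_dvd.mpr ⟨-(j * v), ?_⟩).symm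
    linear_combination (j : ℤ) * huv
  have hu : IsCoprime m (u ^ k) := IsCoprime.pow_right ⟨v, d, by linear_combination huv⟩
  exact hu.dvd_of_dvd_mul_left <| hmod.dvd_iff.mpr <| hm.trans (factorial_dvd_prod_range_add _ k)

lemma factorial_dvd_prod_pow_mul_prod_range_add_mul (n : ℤ) {d : ℕ} (hd : d ≠ 0) (k : ℕ) :
    (k ! : ℤ) ∣
      (∏ p ∈ d.primeFactors, p ^ (k / (p - 1)) : ℕ) * ∏ j ∈ range k, (n + j * d) := by
  rw [← Int.dvd_natAbs, Int.natCast_dvd_natCast, Nat.dvd_iff_prime_pow_dvd_dvd]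
  intro p e hp hpe
  by_cases hpd : p ∣ d
  · have hle : e ≤ k / (p - 1) :=
      ((hp.pow_dvd_iff_le_factorization k.factorial_ne_zero).mp hpe).trans
        (Nat.factorization_factorial_le_div_pred hp k)
    have hpM : p ∈ d.primeFactors := Nat.mem_primeFactors.mpr ⟨hp, hpd, hd⟩
    refine (pow_dvd_pow p hle).trans <|
      (dvd_prod_of_mem (fun q => q ^ (k / (q - 1))) hpM).trans ?_
    rw [Int.natAbs_mul, Int.natAbs_natCast]
    exact dvd_mul_right _ _
  · have hcop : IsCoprime (d : ℤ) ((p ^ e : ℕ) : ℤ) :=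
      Nat.isCoprime_iff_coprime.mpr ((hp.coprime_iff_not_dvd.mpr hpd).pow_left e).symm
    have := (Int.dvd_prod_range_add_mul n hcop (Int.natCast_dvd_natCast.mpr hpe)).mul_left
      ((∏ p ∈ d.primeFactors, p ^ (k / (p - 1)) : ℕ) : ℤ)
    exact Int.natCast_dvd.mp this

lemma den_pow_mul_pochQ (a : ℚ) (k : ℕ) :
    (a.den : ℚ) ^ k * pochQ a k = ((∏ j ∈ range k, (a.num + j * a.den) : ℤ) : ℚ) := by
  rw [pochQ, ← card_range k, ← prod_const, card_range, ← prod_mul_distrib]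
  push_cast
  refine prod_congr rfl fun j _ => ?_
  rw [mul_add, Rat.den_mul_eq_num]
  ring

theorem stmt_5 (a : ℚ) (k : ℕ) :
    ∃ z : ℤ, (mu a k : ℚ) * pochQ a k / (k.factorial : ℚ) = z := by
  obtain ⟨z, hz⟩ := factorial_dvd_prod_pow_mul_prod_range_add_mul a.num a.den_nz k
  refine ⟨z, ?_⟩
  have hzQ := congrArg (fun x : ℤ => (x : ℚ)) hz
  push_cast at hzQ
  rw [div_eq_iff (by positivity), mu, Nat.cast_mul, Nat.cast_pow, mul_right_comm,
    den_pow_mul_pochQ]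
  push_cast
  linear_combination hzQ
end

section
/- For real a > -1, real b > 0, and n ≥ 0: the limit as a_2 → a of (q_n(a, a_2, b) - q_n(a_2, a, b))/(a_2 - a) equals Σ_{k=0}^n b^{n-k} C(n,k)² (a+1)_{n+k} (H_{n+k}(a) + 2H_{n-k} - 2H_k), where q_n(a_1,a_2,b) = Σ_{k=0}^n C(n+a_1-a_2,k) C(n+a_2-a_1,n-k) (a_2+1)_{n+k} b^{n-k}. -/
open Real Filter

/-- Pochhammer symbol `(a)_m` for real `a`. -/
noncomputable def pochR (a : ℝ) (m : ℕ) : ℝ := ∏ j ∈ Finset.range m, (a + j)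

/-- Generalized binomial coefficient `C(x,k)` for real `x`. -/
noncomputable def gbinomR (x : ℝ) (k : ℕ) : ℝ :=
  (∏ i ∈ Finset.range k, (x - i)) / (k.factorial : ℝ)

/-- Generalized harmonic sum `H_m(a) = ∑_{j=1}^m 1/(j+a)`, with `H_m = H_m(0)`. -/
noncomputable def harmonicGen (m : ℕ) (a : ℝ) : ℝ := ∑ j ∈ Finset.range m, 1 / ((j : ℝ) + 1 + a)

/-- `q_n(a₁,a₂,b) = ∑_{k=0}^n C(n+a₁-a₂,k) C(n+a₂-a₁,n-k) (a₂+1)_{n+k} b^{n-k}`. -/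
noncomputable def qSeq (n : ℕ) (a₁ a₂ b : ℝ) : ℝ :=
  ∑ k ∈ Finset.range (n + 1),
    gbinomR ((n : ℝ) + a₁ - a₂) k * gbinomR ((n : ℝ) + a₂ - a₁) (n - k) *
      pochR (a₂ + 1) (n + k) * b ^ (n - k)

/-! The quotient is the slope at `t = a` of `f t = q_n(a,t,b) - q_n(t,a,b)`, which vanishes at
`t = a`, so its limit is `f'(a)`, computed termwise by the product rule. At `t = a` both binomial
factors equal `C(n,k)`; the logarithmic derivative of `C(x,k)` at `x = n` is `H_n - H_{n-k}`, and that
of `(t+1)_m` at `t = a` is `H_m(a)`. The binomial contributions of the two `q`'s differ only in sign,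
and together they give `2 C(n,k)² (H_{n-k} - H_k)`. -/

open Finset Topology

lemma hasDerivAt_prod_add {ι 𝕜 : Type*} [NontriviallyNormedField 𝕜] (s : Finset ι) (c : ι → 𝕜)
    {x : 𝕜} (h : ∀ j ∈ s, x + c j ≠ 0) :
    HasDerivAt (fun t => ∏ j ∈ s, (t + c j)) ((∏ j ∈ s, (x + c j)) * ∑ j ∈ s, (x + c j)⁻¹) x := by
  classical
  have hprod := HasDerivAt.fun_finsetProd (u := s) fun j _ => (hasDerivAt_id' x).add_const (c j)
  simp only [smul_eq_mul, mul_one] at hprod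
  refine hprod.congr_deriv ?_
  rw [mul_sum]
  refine sum_congr rfl fun j hj => ?_
  rw [← mul_prod_erase s _ hj]
  field_simp [h j hj]

lemma prod_range_natCast_sub {n k : ℕ} (hk : k ≤ n) :
    ∏ i ∈ range k, ((n : ℝ) - i) = k.factorial * n.choose k := by
  rw [← Nat.cast_mul, ← Nat.descFactorial_eq_factorial_mul_choose, Nat.descFactorial_eq_prod_range,
    Nat.cast_prod]
  exact prod_congr rfl fun i hi => by rw [Nat.cast_sub (by grind)]

lemma gbinomR_natCast {n k : ℕ} (hk : k ≤ n) : gbinomR n k = n.choose k := by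
  rw [gbinomR, prod_range_natCast_sub hk]
  field_simp

lemma harmonicGen_succ (m : ℕ) (a : ℝ) :
    harmonicGen (m + 1) a = harmonicGen m a + ((m : ℝ) + 1 + a)⁻¹ := by
  rw [harmonicGen, sum_range_succ, one_div]; rfl

lemma harmonicGen_eq_sum_inv (m : ℕ) (a : ℝ) :
    harmonicGen m a = ∑ j ∈ range m, (a + 1 + j)⁻¹ :=
  sum_congr rfl fun j _ => by rw [one_div]; ring_nf

lemma sum_range_inv_natCast_sub {n k : ℕ} (hk : k ≤ n) :
    ∑ i ∈ range k, ((n : ℝ) - i)⁻¹ = harmonicGen n 0 - harmonicGen (n - k) 0 := by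
  induction k with
  | zero => simp
  | succ k ih =>
    rw [sum_range_succ, ih (by omega), show n - k = n - (k + 1) + 1 by omega, harmonicGen_succ,
      Nat.cast_sub hk]
    push_cast
    ring

lemma hasDerivAt_gbinomR_natCast {n k : ℕ} (hk : k ≤ n) :
    HasDerivAt (fun u => gbinomR u k)
      (n.choose k * (harmonicGen n 0 - harmonicGen (n - k) 0)) n := by
  have hne : ∀ i ∈ range k, (n : ℝ) + -i ≠ 0 := fun i hi => by
    have : (i : ℝ) < n := by exact_mod_cast (mem_range.mp hi).trans_le hk
    linarith
  have := (hasDerivAt_prod_add (range k) (fun i : ℕ => -(i : ℝ)) hne).div_const k.factorial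
  simp only [← sub_eq_add_neg, prod_range_natCast_sub hk, sum_range_inv_natCast_sub hk] at this
  refine HasDerivAt.congr_deriv (f := fun u => gbinomR u k) this ?_
  field_simp

lemma hasDerivAt_gbinomR_add_sub {n k : ℕ} (hk : k ≤ n) (a : ℝ) :
    HasDerivAt (fun t => gbinomR (n + t - a) k)
      (n.choose k * (harmonicGen n 0 - harmonicGen (n - k) 0)) a :=
  ((hasDerivAt_gbinomR_natCast hk).comp_of_eq a
    (((hasDerivAt_id a).const_add (n : ℝ)).sub_const a) (by simp)).congr_deriv (mul_one _)

lemma hasDerivAt_gbinomR_sub_sub {n k : ℕ} (hk : k ≤ n) (a : ℝ) :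
    HasDerivAt (fun t => gbinomR (n + a - t) k)
      (-(n.choose k * (harmonicGen n 0 - harmonicGen (n - k) 0))) a :=
  ((hasDerivAt_gbinomR_natCast hk).comp_of_eq a
    ((hasDerivAt_id a).const_sub ((n : ℝ) + a)) (by simp)).congr_deriv (mul_neg_one _)

lemma hasDerivAt_pochR_add_one {a : ℝ} (ha : -1 < a) (m : ℕ) :
    HasDerivAt (fun t => pochR (t + 1) m) (pochR (a + 1) m * harmonicGen m a) a := by
  have hne : ∀ j ∈ range m, a + (1 + j) ≠ 0 := fun j _ => by
    have := j.cast_nonneg (α := ℝ)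
    exact (by linarith : 0 < a + (1 + j)).ne'
  have := hasDerivAt_prod_add (range m) (fun j : ℕ => 1 + (j : ℝ)) hne
  simp only [← add_assoc] at this
  rwa [harmonicGen_eq_sum_inv]

noncomputable def qTerm (n k : ℕ) (a₁ a₂ b : ℝ) : ℝ :=
  gbinomR ((n : ℝ) + a₁ - a₂) k * gbinomR ((n : ℝ) + a₂ - a₁) (n - k) *
    pochR (a₂ + 1) (n + k) * b ^ (n - k)

lemma qSeq_eq_sum_qTerm (n : ℕ) (a₁ a₂ b : ℝ) :
    qSeq n a₁ a₂ b = ∑ k ∈ range (n + 1), qTerm n k a₁ a₂ b := rfl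

lemma hasDerivAt_qTerm_sub_qTerm_swap {a : ℝ} (ha : -1 < a) (b : ℝ) {n k : ℕ} (hk : k ≤ n) :
    HasDerivAt (fun t => qTerm n k a t b - qTerm n k t a b)
      (b ^ (n - k) * (n.choose k : ℝ) ^ 2 * pochR (a + 1) (n + k) *
        (harmonicGen (n + k) a + 2 * harmonicGen (n - k) 0 - 2 * harmonicGen k 0)) a := by
  have hk' : n - k ≤ n := n.sub_le k
  have h₁ := hasDerivAt_gbinomR_sub_sub hk a
  have h₁' := hasDerivAt_gbinomR_add_sub hk a
  have h₂ := hasDerivAt_gbinomR_add_sub hk' a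
  have h₂' := hasDerivAt_gbinomR_sub_sub hk' a
  rw [Nat.choose_symm hk, Nat.sub_sub_self hk] at h₂ h₂'
  have hP := hasDerivAt_pochR_add_one ha (n + k)
  have hdiff := (((h₁.mul h₂).mul hP).mul_const (b ^ (n - k))).sub
    (((h₁'.mul h₂').mul_const (pochR (a + 1) (n + k))).mul_const (b ^ (n - k)))
  refine HasDerivAt.congr_deriv (f := fun t => qTerm n k a t b - qTerm n k t a b) hdiff ?_
  simp only [Pi.mul_apply, add_sub_cancel_right, gbinomR_natCast hk, gbinomR_natCast hk',
    Nat.choose_symm hk]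
  ring

lemma tendsto_div_sub_of_hasDerivAt {𝕜 : Type*} [NontriviallyNormedField 𝕜] {f : 𝕜 → 𝕜}
    {f' a : 𝕜} (hf : HasDerivAt f f' a) (h₀ : f a = 0) :
    Tendsto (fun t => f t / (t - a)) (𝓝[≠] a) (𝓝 f') := by
  simpa [slope_fun_def_field, h₀] using hf.tendsto_slope

theorem stmt_16_general (a b : ℝ) (ha : -1 < a) (n : ℕ) :
    Tendsto (fun t : ℝ => (qSeq n a t b - qSeq n t a b) / (t - a))
      (nhdsWithin a {a}ᶜ)
      (nhds (∑ k ∈ Finset.range (n + 1),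
        b ^ (n - k) * (n.choose k : ℝ) ^ 2 * pochR (a + 1) (n + k) *
          (harmonicGen (n + k) a + 2 * harmonicGen (n - k) 0 - 2 * harmonicGen k 0))) := by
  refine tendsto_div_sub_of_hasDerivAt ?_ (sub_self _)
  simp only [qSeq_eq_sum_qTerm, ← sum_sub_distrib]
  exact HasDerivAt.fun_sum fun k hk =>
    hasDerivAt_qTerm_sub_qTerm_swap ha b (Nat.lt_succ_iff.mp (mem_range.mp hk))

theorem stmt_16 (a b : ℝ) (ha : -1 < a) (hb : 0 < b) (n : ℕ) :
    Tendsto (fun t : ℝ => (qSeq n a t b - qSeq n t a b) / (t - a))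
      (nhdsWithin a {a}ᶜ)
      (nhds (∑ k ∈ Finset.range (n + 1),
        b ^ (n - k) * (n.choose k : ℝ) ^ 2 * pochR (a + 1) (n + k) *
          (harmonicGen (n + k) a + 2 * harmonicGen (n - k) 0 - 2 * harmonicGen k 0))) :=
  stmt_16_general a b ha n
end
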